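/- arXiv:2308.10145 — 2 statements merged into one kernel-verified Lean document; each statement's English description precedes it below -/
import Mathlib

section
/- Let T : 𝒳 → 𝒳 be a measurable map pushing P_X forward to P_Y and satisfying ∫ d^p(x, T(x)) dP_X(x) = W_p^p(P_X, P_Y; d) (i.e., T is an optimal transport map). Define w(t) as the law of (1−t)·id + t·T pushed forward from P_X (when 𝒳 is a convex subset of a normed space and d is the norm distance). Then W_p(w(0), w(1)) = (∫ ‖x − T(x)‖^p dP_X(x))^{1/p} and W_p(w(t), w(t')) ≤ |t−t'| W_p(w(0), w(1)) for all t, t' ∈ [0,1]; combined with the triangle inequality this yields W_p(w(t), w(t')) = |t−t'| W_p(w(0), w(1)), so w is a constant-speed geodesic (McCann's interpolant). -/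
/-!
Transporting `P` along the coupling `x ↦ (lineMap x (T x) t, lineMap x (T x) t')` moves each
point by `|t - t'| * ‖x - T x‖`, so `W_p(w t, w t') ≤ |t - t'| * (∫ ‖x - T x‖^p dP)^(1/p)`, and the
right-hand factor is `W_p(w 0, w 1)` because `T` is optimal. Conversely, in
`W_p(w 0, w 1) ≤ W_p(w 0, w t) + W_p(w t, w t') + W_p(w t', w 1)` the outer terms are at most
`t` and `1 - t'` times `W_p(w 0, w 1)`, which is finite by the moment bounds, so the middle term
is at least `(t' - t) * W_p(w 0, w 1)`. The triangle inequality for `W_p` comes from gluing two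
couplings along their common marginal by disintegration, followed by Minkowski's inequality.
-/

open MeasureTheory ENNReal

/-- `π` is a coupling of `P` and `Q`: its marginals are `P` and `Q`. -/
def IsCoupling {X Y : Type*} [MeasurableSpace X] [MeasurableSpace Y]
    (π : Measure (X × Y)) (P : Measure X) (Q : Measure Y) : Prop :=
  π.map Prod.fst = P ∧ π.map Prod.snd = Q

/-- Infimal transport cost over all couplings of `P` and `Q` for the cost `ρ`. -/
noncomputable def WpPow {X : Type*} [MeasurableSpace X]
    (ρ : X → X → ℝ≥0∞) (P Q : Measure X) : ℝ≥0∞ :=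
  ⨅ π : {π : Measure (X × X) // IsCoupling π P Q}, ∫⁻ z, ρ z.1 z.2 ∂π.1

/-- The `p`-Wasserstein distance. -/
noncomputable def Wp {X : Type*} [MeasurableSpace X] [PseudoEMetricSpace X]
    (p : ℝ) (P Q : Measure X) : ℝ≥0∞ :=
  (WpPow (fun x y => edist x y ^ p) P Q) ^ (1 / p)

open ProbabilityTheory

section Coupling

variable {X Y : Type*} [MeasurableSpace X] [MeasurableSpace Y]

theorem IsCoupling.isFiniteMeasure_of_left {π : Measure (X × Y)} {P : Measure X}
    {Q : Measure Y} [IsFiniteMeasure P] (h : IsCoupling π P Q) : IsFiniteMeasure π :=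
  have : IsFiniteMeasure (π.map Prod.fst) := h.1 ▸ inferInstance
  Measure.isFiniteMeasure_of_map measurable_fst.aemeasurable

theorem IsCoupling.isFiniteMeasure_of_right {π : Measure (X × Y)} {P : Measure X}
    {Q : Measure Y} [IsFiniteMeasure Q] (h : IsCoupling π P Q) : IsFiniteMeasure π :=
  have : IsFiniteMeasure (π.map Prod.snd) := h.2 ▸ inferInstance
  Measure.isFiniteMeasure_of_map measurable_snd.aemeasurable

theorem isCoupling_map_prodMk {α : Type*} [MeasurableSpace α] {μ : Measure α} {f : α → X}
    {g : α → Y} (hf : Measurable f) (hg : Measurable g) :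
    IsCoupling (μ.map fun a => (f a, g a)) (μ.map f) (μ.map g) :=
  ⟨by rw [Measure.map_map measurable_fst (hf.prodMk hg)]; rfl,
    by rw [Measure.map_map measurable_snd (hf.prodMk hg)]; rfl⟩

theorem IsCoupling.map_swap {π : Measure (X × Y)} {P : Measure X} {Q : Measure Y}
    (h : IsCoupling π P Q) : IsCoupling (π.map Prod.swap) Q P :=
  ⟨by rw [Measure.map_map measurable_fst measurable_swap]; exact h.2,
    by rw [Measure.map_map measurable_snd measurable_swap]; exact h.1⟩

theorem exists_gluing {Z : Type*} [MeasurableSpace Z]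
    [StandardBorelSpace Z] [Nonempty Z] {π₁ : Measure (X × Y)} {π₂ : Measure (Y × Z)}
    [SFinite π₁] [IsFiniteMeasure π₂] (h : π₁.map Prod.snd = π₂.map Prod.fst) :
    ∃ η : Measure ((X × Y) × Z), η.map Prod.fst = π₁ ∧ η.map (fun z => (z.1.2, z.2)) = π₂ := by
  refine ⟨π₁ ⊗ₘ Kernel.prodMkLeft X π₂.condKernel, Measure.fst_compProd _ _, ?_⟩
  have hg : Measurable fun z : (X × Y) × Z => (z.1.2, z.2) := by fun_prop
  ext s hs
  conv_rhs => rw [← π₂.disintegrate π₂.condKernel]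
  rw [Measure.map_apply hg hs, Measure.compProd_apply (hg hs), Measure.compProd_apply hs,
    Measure.fst, ← h, lintegral_map (Kernel.measurable_kernel_prodMk_left hs) measurable_snd]
  rfl

theorem WpPow_le_lintegral {ρ : X → X → ℝ≥0∞} {P Q : Measure X} {π : Measure (X × X)}
    (h : IsCoupling π P Q) : WpPow ρ P Q ≤ ∫⁻ z, ρ z.1 z.2 ∂π :=
  iInf_le (fun π : {π : Measure (X × X) // IsCoupling π P Q} => ∫⁻ z, ρ z.1 z.2 ∂π.1) ⟨π, h⟩

end Coupling

section Wasserstein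

variable {X : Type*} [MeasurableSpace X] [PseudoEMetricSpace X] {p : ℝ}

theorem Wp_eq_iInf (hp : 0 < p) (P Q : Measure X) :
    Wp p P Q = ⨅ π : {π : Measure (X × X) // IsCoupling π P Q},
      (∫⁻ z, edist z.1 z.2 ^ p ∂π.1) ^ (1 / p) :=
  (orderIsoRpow (1 / p) (by positivity)).map_iInf _

theorem Wp_le_of_isCoupling (hp : 0 ≤ p) {P Q : Measure X} {π : Measure (X × X)}
    (h : IsCoupling π P Q) : Wp p P Q ≤ (∫⁻ z, edist z.1 z.2 ^ p ∂π) ^ (1 / p) :=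
  rpow_le_rpow (WpPow_le_lintegral h) (by positivity)

variable [OpensMeasurableSpace X] [SecondCountableTopology X]

theorem Wp_comm (p : ℝ) (P Q : Measure X) : Wp p P Q = Wp p Q P := by
  suffices ∀ P Q : Measure X, WpPow (fun x y => edist x y ^ p) P Q ≤
      WpPow (fun x y => edist x y ^ p) Q P by
    rw [Wp, Wp, (this P Q).antisymm (this Q P)]
  refine fun P Q => le_iInf fun π => (WpPow_le_lintegral π.2.map_swap).trans_eq ?_
  rw [lintegral_map (measurable_edist.pow_const p) measurable_swap]
  simp [edist_comm]

theorem Wp_map_le {α : Type*} [MeasurableSpace α] (hp : 0 ≤ p) (μ : Measure α) {f g : α → X}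
    (hf : Measurable f) (hg : Measurable g) :
    Wp p (μ.map f) (μ.map g) ≤ (∫⁻ a, edist (f a) (g a) ^ p ∂μ) ^ (1 / p) := by
  refine (Wp_le_of_isCoupling hp (isCoupling_map_prodMk hf hg)).trans_eq ?_
  rw [lintegral_map (measurable_edist.pow_const p) (hf.prodMk hg)]

theorem lintegral_edist_rpow_triangle {α : Type*} [MeasurableSpace α] (hp : 1 ≤ p)
    (μ : Measure α) {f g h : α → X} (hf : Measurable f) (hg : Measurable g) (hh : Measurable h) :
    (∫⁻ a, edist (f a) (h a) ^ p ∂μ) ^ (1 / p) ≤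
      (∫⁻ a, edist (f a) (g a) ^ p ∂μ) ^ (1 / p) + (∫⁻ a, edist (g a) (h a) ^ p ∂μ) ^ (1 / p) :=
  calc (∫⁻ a, edist (f a) (h a) ^ p ∂μ) ^ (1 / p)
      ≤ (∫⁻ a, (edist (f a) (g a) + edist (g a) (h a)) ^ p ∂μ) ^ (1 / p) := by
        gcongr with a
        exact edist_triangle _ _ _
    _ ≤ _ := lintegral_Lp_add_le (hf.edist hg).aemeasurable (hg.edist hh).aemeasurable hp

theorem Wp_triangle [StandardBorelSpace X] [Nonempty X] (hp : 1 ≤ p) (μ ν ρ : Measure X)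
    [IsFiniteMeasure ν] : Wp p μ ρ ≤ Wp p μ ν + Wp p ν ρ := by
  have hp0 : 0 < p := by linarith
  rw [Wp_eq_iInf hp0, Wp_eq_iInf hp0, Wp_eq_iInf hp0, ENNReal.iInf_add]
  refine le_iInf fun π₁ => ?_
  rw [ENNReal.add_iInf]
  refine le_iInf fun π₂ => ?_
  have := π₁.2.isFiniteMeasure_of_right
  have := π₂.2.isFiniteMeasure_of_left
  obtain ⟨η, hη₁, hη₂⟩ := exists_gluing (π₁.2.2.trans π₂.2.1.symm)
  have hμ : η.map (fun z => z.1.1) = μ := by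
    rw [← π₁.2.1, ← hη₁, Measure.map_map measurable_fst measurable_fst]; rfl
  have hρ : η.map (fun z => z.2) = ρ := by
    rw [← π₂.2.2, ← hη₂, Measure.map_map measurable_snd (by fun_prop)]; rfl
  have hη : IsCoupling (η.map fun z => (z.1.1, z.2)) μ ρ :=
    hμ ▸ hρ ▸ isCoupling_map_prodMk (by fun_prop) (by fun_prop)
  refine iInf_le_of_le ⟨_, hη⟩ ?_
  rw [← hη₁, ← hη₂, lintegral_map (measurable_edist.pow_const p) (by fun_prop),
    lintegral_map (measurable_edist.pow_const p) (by fun_prop),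
    lintegral_map (measurable_edist.pow_const p) (by fun_prop)]
  exact lintegral_edist_rpow_triangle hp η (by fun_prop) (by fun_prop) (by fun_prop)

end Wasserstein

section Interpolation

open AffineMap

theorem edist_lineMap_lineMap {V P : Type*} [SeminormedAddCommGroup V] [NormedSpace ℝ V]
    [PseudoMetricSpace P] [NormedAddTorsor V P] (x y : P) (s t : ℝ) :
    edist (lineMap x y s) (lineMap x y t) = ENNReal.ofReal |s - t| * edist x y := by
  rw [edist_nndist, nndist_lineMap_lineMap, ENNReal.coe_mul, ← edist_nndist, ← edist_nndist,
    edist_dist, Real.dist_eq]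

variable {α E : Type*} [MeasurableSpace α] [NormedAddCommGroup E] [NormedSpace ℝ E]
  [MeasurableSpace E] [BorelSpace E] [SecondCountableTopology E] {p : ℝ}

theorem Wp_map_lineMap_le (hp : 0 < p) (μ : Measure α) {S T : α → E} (hS : Measurable S)
    (hT : Measurable T) (s t : ℝ) :
    Wp p (μ.map fun a => lineMap (S a) (T a) s) (μ.map fun a => lineMap (S a) (T a) t) ≤
      ENNReal.ofReal |s - t| * (∫⁻ a, edist (S a) (T a) ^ p ∂μ) ^ (1 / p) := by
  have hline : ∀ r : ℝ, Measurable fun a => lineMap (S a) (T a) r := fun r => by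
    simp only [lineMap_apply_module]
    fun_prop
  refine (Wp_map_le hp.le μ (hline s) (hline t)).trans_eq ?_
  simp_rw [edist_lineMap_lineMap, ENNReal.mul_rpow_of_nonneg _ _ hp.le]
  rw [lintegral_const_mul _ ((hS.edist hT).pow_const p),
    ENNReal.mul_rpow_of_nonneg _ _ (by positivity), ← ENNReal.rpow_mul, mul_one_div_cancel hp.ne',
    ENNReal.rpow_one]

end Interpolation

section Moments

variable {α E : Type*} [MeasurableSpace α] [NormedAddCommGroup E] {p : ℝ}

theorem memLp_id_of_lintegral_rpow_lt_top [MeasurableSpace E] [OpensMeasurableSpace E]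
    [SecondCountableTopology E] (hp : 0 < p) {μ : Measure E}
    (h : ∫⁻ x, (‖x‖₊ : ℝ≥0∞) ^ p ∂μ < ⊤) : MemLp id (ENNReal.ofReal p) μ := by
  refine ⟨aestronglyMeasurable_id, ?_⟩
  rw [eLpNorm_lt_top_iff_lintegral_rpow_enorm_lt_top (by simpa using hp) ofReal_ne_top,
    toReal_ofReal hp.le]
  simpa only [id, enorm_eq_nnnorm] using h

theorem lintegral_edist_rpow_lt_top (hp : 0 < p) {μ : Measure α} {f g : α → E}
    (hf : MemLp f (ENNReal.ofReal p) μ) (hg : MemLp g (ENNReal.ofReal p) μ) :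
    ∫⁻ a, edist (f a) (g a) ^ p ∂μ < ⊤ := by
  have := (hf.sub hg).eLpNorm_lt_top
  rw [eLpNorm_lt_top_iff_lintegral_rpow_enorm_lt_top (by simpa using hp) ofReal_ne_top,
    toReal_ofReal hp.le] at this
  simpa [edist_eq_enorm_sub] using this

end Moments

open Set in
theorem eq_ofReal_abs_sub_mul_of_le {α : Type*} {d : α → α → ℝ≥0∞} {γ : ℝ → α}
    (hcomm : ∀ s t, d (γ s) (γ t) = d (γ t) (γ s))
    (htri : ∀ r s t, d (γ r) (γ t) ≤ d (γ r) (γ s) + d (γ s) (γ t))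
    (hfin : d (γ 0) (γ 1) ≠ ⊤)
    (hle : ∀ s ∈ Icc (0 : ℝ) 1, ∀ t ∈ Icc (0 : ℝ) 1,
      d (γ s) (γ t) ≤ ENNReal.ofReal |s - t| * d (γ 0) (γ 1)) :
    ∀ s ∈ Icc (0 : ℝ) 1, ∀ t ∈ Icc (0 : ℝ) 1,
      d (γ s) (γ t) = ENNReal.ofReal |s - t| * d (γ 0) (γ 1) := by
  set L := d (γ 0) (γ 1)
  have hge : ∀ s t, 0 ≤ s → s ≤ t → t ≤ 1 → ENNReal.ofReal (t - s) * L ≤ d (γ s) (γ t) := by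
    intro s t hs hst ht
    have h0s := hle 0 ⟨le_rfl, zero_le_one⟩ s ⟨hs, hst.trans ht⟩
    have ht1 := hle t ⟨hs.trans hst, ht⟩ 1 ⟨zero_le_one, le_rfl⟩
    rw [zero_sub, abs_neg, abs_of_nonneg hs] at h0s
    rw [abs_of_nonpos (by linarith), neg_sub] at ht1
    have hsplit : ENNReal.ofReal s * L + ENNReal.ofReal (t - s) * L + ENNReal.ofReal (1 - t) * L
        = L := by
      rw [← add_mul, ← add_mul, ← ofReal_add hs (by linarith),
        ← ofReal_add (by linarith) (by linarith)]
      norm_num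
    refine ENNReal.le_of_add_le_add_left (a := ENNReal.ofReal s * L + ENNReal.ofReal (1 - t) * L)
      (by finiteness) ?_
    calc _ = ENNReal.ofReal s * L + ENNReal.ofReal (t - s) * L + ENNReal.ofReal (1 - t) * L := by
          ring
      _ = L := hsplit
      _ ≤ d (γ 0) (γ s) + (d (γ s) (γ t) + d (γ t) (γ 1)) :=
          (htri 0 s 1).trans (add_le_add_right (htri s t 1) _)
      _ ≤ ENNReal.ofReal s * L + (d (γ s) (γ t) + ENNReal.ofReal (1 - t) * L) := by gcongr
      _ = _ := by ring
  intro s hs t ht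
  refine (hle s hs t ht).antisymm ?_
  rcases le_total s t with hst | hts
  · rw [abs_sub_comm, abs_of_nonneg (sub_nonneg.2 hst)]
    exact hge s t hs.1 hst ht.2
  · rw [abs_of_nonneg (sub_nonneg.2 hts), hcomm]
    exact hge t s ht.1 hts hs.2

open AffineMap in
theorem stmt13_general (D : ℕ) (p : ℝ) (hp : 1 ≤ p)
    (P Q : Measure (EuclideanSpace ℝ (Fin D)))
    [IsProbabilityMeasure P]
    (hPmom : ∫⁻ x, (‖x‖₊ : ℝ≥0∞) ^ p ∂P < ⊤)
    (hQmom : ∫⁻ x, (‖x‖₊ : ℝ≥0∞) ^ p ∂Q < ⊤)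
    (T : EuclideanSpace ℝ (Fin D) → EuclideanSpace ℝ (Fin D))
    (hT : Measurable T) (hpush : P.map T = Q)
    (hopt : ∫⁻ x, edist x (T x) ^ p ∂P = WpPow (fun x y => edist x y ^ p) P Q)
    (w : ℝ → Measure (EuclideanSpace ℝ (Fin D)))
    (hw : w = fun t => P.map (fun x => (1 - t) • x + t • T x)) :
    Wp p (w 0) (w 1) = (∫⁻ x, edist x (T x) ^ p ∂P) ^ (1 / p) ∧
    (∀ t ∈ Set.Icc (0 : ℝ) 1, ∀ t' ∈ Set.Icc (0 : ℝ) 1,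
      Wp p (w t) (w t') ≤ ENNReal.ofReal |t - t'| * Wp p (w 0) (w 1)) ∧
    (∀ t ∈ Set.Icc (0 : ℝ) 1, ∀ t' ∈ Set.Icc (0 : ℝ) 1,
      Wp p (w t) (w t') = ENNReal.ofReal |t - t'| * Wp p (w 0) (w 1)) := by
  have hp0 : 0 < p := by linarith
  have hw' : ∀ t, w t = P.map fun x => lineMap x (T x) t := by
    simp [hw, lineMap_apply_module]
  have : ∀ t, IsProbabilityMeasure (w t) := fun t =>
    hw' t ▸ Measure.isProbabilityMeasure_map (by simp only [lineMap_apply_module]; fun_prop)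
  have h01 : Wp p (w 0) (w 1) = (∫⁻ x, edist x (T x) ^ p ∂P) ^ (1 / p) := by
    rw [hw', hw', Wp, hopt]
    simp [hpush, Measure.map_id']
  have hle : ∀ t ∈ Set.Icc (0 : ℝ) 1, ∀ t' ∈ Set.Icc (0 : ℝ) 1,
      Wp p (w t) (w t') ≤ ENNReal.ofReal |t - t'| * Wp p (w 0) (w 1) := fun t _ t' _ => by
    rw [hw' t, hw' t', h01]
    exact Wp_map_lineMap_le hp0 P measurable_id hT t t'
  have hfin : Wp p (w 0) (w 1) ≠ ⊤ := by
    have hQ := memLp_id_of_lintegral_rpow_lt_top hp0 hQmom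
    rw [← hpush] at hQ
    rw [h01]
    exact rpow_ne_top_of_nonneg (by positivity) (lintegral_edist_rpow_lt_top hp0
      (memLp_id_of_lintegral_rpow_lt_top hp0 hPmom) (hQ.comp_of_map hT.aemeasurable)).ne
  exact ⟨h01, hle, eq_ofReal_abs_sub_mul_of_le (fun s t => Wp_comm p (w s) (w t))
    (fun r s t => Wp_triangle hp (w r) (w s) (w t)) hfin hle⟩

/-- McCann's interpolant: if `T` is an optimal transport map from `P` to `Q` (supported
on a convex subset `K` of Euclidean space), then the curve
`w(t) = ((1−t)·id + t·T)_# P` satisfies `W_p(w 0, w 1) = (∫ ‖x − T(x)‖^p dP)^{1/p}` and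
`W_p(w t, w t') = |t − t'| · W_p(w 0, w 1)` for all `t, t' ∈ [0,1]`:
it is a constant-speed geodesic. -/
theorem stmt13 (D : ℕ) (p : ℝ) (hp : 1 ≤ p)
    (K : Set (EuclideanSpace ℝ (Fin D))) (hK : Convex ℝ K)
    (P Q : Measure (EuclideanSpace ℝ (Fin D)))
    [IsProbabilityMeasure P] [IsProbabilityMeasure Q]
    (hPK : P Kᶜ = 0) (hQK : Q Kᶜ = 0)
    (hPmom : ∫⁻ x, (‖x‖₊ : ℝ≥0∞) ^ p ∂P < ⊤)
    (hQmom : ∫⁻ x, (‖x‖₊ : ℝ≥0∞) ^ p ∂Q < ⊤)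
    (T : EuclideanSpace ℝ (Fin D) → EuclideanSpace ℝ (Fin D))
    (hT : Measurable T) (hpush : P.map T = Q)
    (hopt : ∫⁻ x, edist x (T x) ^ p ∂P = WpPow (fun x y => edist x y ^ p) P Q)
    (w : ℝ → Measure (EuclideanSpace ℝ (Fin D)))
    (hw : w = fun t => P.map (fun x => (1 - t) • x + t • T x)) :
    Wp p (w 0) (w 1) = (∫⁻ x, edist x (T x) ^ p ∂P) ^ (1 / p) ∧
    (∀ t ∈ Set.Icc (0 : ℝ) 1, ∀ t' ∈ Set.Icc (0 : ℝ) 1,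
      Wp p (w t) (w t') ≤ ENNReal.ofReal |t - t'| * Wp p (w 0) (w 1)) ∧
    (∀ t ∈ Set.Icc (0 : ℝ) 1, ∀ t' ∈ Set.Icc (0 : ℝ) 1,
      Wp p (w t) (w t') = ENNReal.ofReal |t - t'| * Wp p (w 0) (w 1)) :=
  stmt13_general D p hp P Q hPmom hQmom T hT hpush hopt w hw
end

section
/- If the optimal transport maps between conditional laws satisfy T(·, c₁, c_m) pushing P_{X|C}(·|c₁) to P_{X|C}(·|c_m) with zero cost in the metric d_Enc (i.e., Enc(x, c₁) = Enc(T(x, c₁, c_m), c_m) for P_{X|C}(·|c₁)-almost every x), and Gen(Enc(x,c),c)=x for all (x,c), then for every m the law of Gen(Σ_{m'} α_{m'} Enc(T(X₁, c₁, c_{m'}), c_{m'}), c_m) with X₁ ∼ P_{X|C}(·|c₁) equals P_{X|C}(·|c_m). -/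
open MeasureTheory

/-- If the transport maps `T(·, c₁, c_m)` push the conditional law `μ₁ = P_{X|C}(·|c₁)`
to `ν m = P_{X|C}(·|c_m)` with zero cost in `d_Enc`, i.e.
`Enc(x, c₁) = Enc(T(x, c₁, c_m), c_m)` for `μ₁`-a.e. `x`, and `Gen(Enc(x,c),c) = x`,
then for every `m` the law of
`Gen(Σ_{m'} α_{m'} Enc(T(X₁, c₁, c_{m'}), c_{m'}), c_m)` with `X₁ ∼ μ₁` equals `ν m`. -/
theorem stmt18 {X Z C : Type*} [MeasurableSpace X]
    [AddCommGroup Z] [Module ℝ Z]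
    (Enc : X → C → Z) (Gen : Z → C → X)
    (hGE : ∀ x c, Gen (Enc x c) c = x)
    {M : ℕ} (c₁ : C) (cs : Fin M → C)
    (μ₁ : Measure X) [IsProbabilityMeasure μ₁]
    (ν : Fin M → Measure X)
    (T : X → C → X)
    (hpush : ∀ m, μ₁.map (fun x => T x (cs m)) = ν m)
    (hzero : ∀ m, ∀ᵐ x ∂μ₁, Enc x c₁ = Enc (T x (cs m)) (cs m))
    (α : Fin M → ℝ) (hα : ∀ m, 0 ≤ α m) (hsum : ∑ m, α m = 1) :
    ∀ m, μ₁.map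
        (fun x => Gen (∑ m', α m' • Enc (T x (cs m')) (cs m')) (cs m)) = ν m := by
  intro m
  rw [← hpush m]
  apply Measure.map_congr
  have hall : ∀ᵐ x ∂μ₁, ∀ m', Enc x c₁ = Enc (T x (cs m')) (cs m') :=
    (MeasureTheory.ae_all_iff).2 hzero
  filter_upwards [hall] with x hx
  have : (∑ m', α m' • Enc (T x (cs m')) (cs m')) = Enc x c₁ := by
    simp only [← hx]
    rw [← Finset.sum_smul, hsum, one_smul]
  rw [this, hx m, hGE]
end
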